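/- Let (K, v) be a valued field with value group G, let s : G → K be a q-section, and let (≤_g)_{g∈G} be a family of group orders on the additive quotients K^g/K_g. Define the lifting ≤ on K by: a ≤ b iff a = b, or 0 ≤_g (b − a) + K_g where g = v(b − a). Then ≤ is a field order of K if and only if: (1) ≤_0 is a field order of the residue field Kv, and (2) there exists a group homomorphism ε : G → {−1, 1} such that for every g ∈ G the isomorphism φ_g : Kv → K^g/K_g, a + K_0 ↦ s(g)a + K_g, is order-preserving (from ≤_0 to ≤_g) when ε(g) = 1 and order-reversing when ε(g) = −1. -/

import Mathlib

/-- A total quasi-order: a reflexive, transitive, total binary relation. -/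
def IsQO {A : Type*} (q : A → A → Prop) : Prop :=
  Reflexive q ∧ Transitive q ∧ ∀ a b, q a b ∨ q b a

/-- `a ∼ b`: the equivalence associated to a quasi-order. -/
def QOEquiv {A : Type*} (q : A → A → Prop) (a b : A) : Prop := q a b ∧ q b a

/-- A subset `B` is `≾`-convex. -/
def QOConvex {A : Type*} (q : A → A → Prop) (B : Set A) : Prop :=
  ∀ a b c, b ∈ B → c ∈ B → q b a → q a c → a ∈ B

section Group
variable {G : Type*} [AddCommGroup G]

/-- An element `g` is v-type if `g ∼ -g`. -/
def VType (q : G → G → Prop) (g : G) : Prop := QOEquiv q g (-g)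

/-- An element `g` is o-type if `g ≁ -g` or `g = 0`. -/
def OType (q : G → G → Prop) (g : G) : Prop := ¬ QOEquiv q g (-g) ∨ g = 0

/-- A compatible quasi-order on an abelian group: a total q.o. satisfying (Q1) and (Q2). -/
def IsCompatQO (q : G → G → Prop) : Prop :=
  IsQO q ∧ (∀ g, QOEquiv q g 0 → g = 0) ∧
    ∀ x y z : G, q x y → ¬ QOEquiv q y z → q (x + z) (y + z)

/-- Condition (*). -/
def StarCond (q : G → G → Prop) : Prop :=
  (∀ g, QOEquiv q g 0 → g = 0) ∧
    ∀ f g h : G, q g h → ¬ QOEquiv q h (-f) → q (g + f) (h + f)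

/-- A group order: a total, antisymmetric, translation invariant (reflexive transitive) order. -/
def IsGroupOrder (q : G → G → Prop) : Prop :=
  IsQO q ∧ (∀ a b, q a b → q b a → a = b) ∧ ∀ x y z : G, q x y → q (x + z) (y + z)

/-- The relation induced by `q` on the quotient `G ⧸ H`:
`g₁ + H ≾ g₂ + H ↔ ∃ h₁ h₂ ∈ H, g₁ + h₁ ≾ g₂ + h₂`, equivalently there are
representatives `a` of `x` and `b` of `y` with `q a b`. -/
def IndRel (q : G → G → Prop) (H : AddSubgroup G) : G ⧸ H → G ⧸ H → Prop :=
  fun x y => ∃ a b : G, (a : G ⧸ H) = x ∧ (b : G ⧸ H) = y ∧ q a b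

end Group

section Val
variable {G : Type*} [AddCommGroup G] {Γ : Type*} [LinearOrder Γ]

/-- A valuation on an abelian group `G` with values in `Γ ∪ {∞}`. -/
def IsGroupVal (v : G → WithTop Γ) : Prop :=
  (∀ g, v g = ⊤ ↔ g = 0) ∧ ∀ g h, min (v g) (v h) ≤ v (g - h)

theorem IsGroupVal.le_neg {v : G → WithTop Γ} (hv : IsGroupVal v) (a : G) :
    v a ≤ v (-a) := by
  have h := hv.2 0 a
  rw [zero_sub] at h
  simpa [(hv.1 0).mpr rfl] using h

/-- The subgroup `G^γ = {g | v g ≥ γ}`. -/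
def vGge (v : G → WithTop Γ) (hv : IsGroupVal v) (γ : Γ) : AddSubgroup G where
  carrier := {g | (γ : WithTop Γ) ≤ v g}
  zero_mem' := by simp [Set.mem_setOf_eq, (hv.1 0).mpr rfl]
  add_mem' := by
    intro a b ha hb
    have h := hv.2 a (-b)
    rw [sub_neg_eq_add] at h
    exact le_trans (le_min ha (le_trans hb (hv.le_neg b))) h
  neg_mem' := by
    intro a ha
    exact le_trans ha (hv.le_neg a)

/-- The subgroup `G_γ = {g | v g > γ}`. -/
def vGlt (v : G → WithTop Γ) (hv : IsGroupVal v) (γ : Γ) : AddSubgroup G where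
  carrier := {g | (γ : WithTop Γ) < v g}
  zero_mem' := by simp [Set.mem_setOf_eq, (hv.1 0).mpr rfl]
  add_mem' := by
    intro a b ha hb
    have h := hv.2 a (-b)
    rw [sub_neg_eq_add] at h
    exact lt_of_lt_of_le (lt_min ha (lt_of_lt_of_le hb (hv.le_neg b))) h
  neg_mem' := by
    intro a ha
    exact lt_of_lt_of_le ha (hv.le_neg a)

/-- `v` is compatible with the q.o. `q`: `0 ≾ g ≾ h → v g ≥ v h`. -/
def ValCompat (v : G → WithTop Γ) (q : G → G → Prop) : Prop :=
  ∀ g h : G, q 0 g → q g h → v h ≤ v g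

/-- The quotient `G^γ / G_γ`. -/
abbrev vQuot (v : G → WithTop Γ) (hv : IsGroupVal v) (γ : Γ) :=
  (vGge v hv γ) ⧸ ((vGlt v hv γ).addSubgroupOf (vGge v hv γ))

/-- The class `g + G_γ` of an element `g ∈ G^γ` in `G^γ / G_γ`. -/
def vMk (v : G → WithTop Γ) (hv : IsGroupVal v) (γ : Γ) (g : G) (hg : g ∈ vGge v hv γ) :
    vQuot v hv γ :=
  QuotientAddGroup.mk ⟨g, hg⟩

/-- The q.o. induced by `q` on the quotient `G^γ / G_γ`. -/
def vInd (v : G → WithTop Γ) (hv : IsGroupVal v) (q : G → G → Prop) (γ : Γ) :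
    vQuot v hv γ → vQuot v hv γ → Prop :=
  fun x y => ∃ (a b : G) (ha : a ∈ vGge v hv γ) (hb : b ∈ vGge v hv γ),
    vMk v hv γ a ha = x ∧ vMk v hv γ b hb = y ∧ q a b

end Val

/-- A valuation on `G`, bundled with its value set. -/
structure ValuationOn (G : Type u) [AddCommGroup G] : Type (u + 1) where
  Γ : Type u
  [lo : LinearOrder Γ]
  v : G → WithTop Γ
  top_iff : ∀ g, v g = ⊤ ↔ g = 0
  sub_min : ∀ g h, min (v g) (v h) ≤ v (g - h)

attribute [instance] ValuationOn.lo

/-- A q.o. is valuational if it is induced by some valuation. -/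
def IsValuational {G : Type u} [AddCommGroup G] (q : G → G → Prop) : Prop :=
  ∃ V : ValuationOn G, ∀ g h, q g h ↔ V.v h ≤ V.v g

section CRel
variable {G : Type*} [AddCommGroup G]

/-- A compatible C-relation on an abelian group. -/
def IsCRel (C : G → G → G → Prop) : Prop :=
  (∀ x y z, C x y z → C x z y) ∧
  (∀ x y z, C x y z → ¬ C y x z) ∧
  (∀ w x y z, C x y z → C w y z ∨ C x w z) ∧
  (∀ x y, x ≠ y → C x y y) ∧
  (∀ f g h x, C f g h → C (x + f) (x + g) (x + h))

/-- A C-quasi-order: the q.o. associated to a compatible C-relation. -/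
def IsCqo (q : G → G → Prop) : Prop :=
  ∃ C : G → G → G → Prop, IsCRel C ∧ ∀ g h, q g h ↔ ¬ C g h 0

end CRel

section FieldVal
variable {K : Type u} [Field K] {G : Type v} [AddCommGroup G] [LinearOrder G] [IsOrderedAddMonoid G]

/-- A (surjective) field valuation `v : K → G ∪ {∞}`. -/
def IsFieldVal (v : K → WithTop G) : Prop :=
  Function.Surjective v ∧ (∀ x, v x = ⊤ ↔ x = 0) ∧
    (∀ x y, v (x * y) = v x + v y) ∧ ∀ x y, min (v x) (v y) ≤ v (x - y)

/-- A field valuation is in particular a valuation of the additive group `(K, +)`. -/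
theorem IsFieldVal.toGroupVal {v : K → WithTop G} (hv : IsFieldVal v) :
    IsGroupVal v :=
  ⟨hv.2.1, hv.2.2.2⟩

/-- A q-section of the valued field `(K, v)`. -/
def IsQSection (v : K → WithTop G) (s : G → K) : Prop :=
  s 0 = 1 ∧ (∀ g, v (s g) = (g : WithTop G)) ∧
    ∀ g h : G, ∃ d : K, d ≠ 0 ∧ s (g + h) * (s g * s h)⁻¹ = d ^ 2

/-- A field order on `K`: a group order of `(K, +)` whose positive cone is closed
under multiplication. -/
def IsFieldOrder (le : K → K → Prop) : Prop :=
  IsGroupOrder le ∧ ∀ a b : K, le 0 a → le 0 b → le 0 (a * b)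

/-- `le0` is a field order of the residue field `Kv = K^0/K_0`: it is a group order
of the additive quotient whose positive cone is closed under (the induced)
multiplication, expressed via representatives. -/
def IsResFieldOrder (v : K → WithTop G) (hv : IsGroupVal v)
    (le0 : vQuot v hv (0 : G) → vQuot v hv (0 : G) → Prop) : Prop :=
  IsGroupOrder le0 ∧
    ∀ (a b : K) (ha : a ∈ vGge v hv 0) (hb : b ∈ vGge v hv 0)
      (hab : a * b ∈ vGge v hv 0),
      le0 0 (vMk v hv 0 a ha) → le0 0 (vMk v hv 0 b hb) →
        le0 0 (vMk v hv 0 (a * b) hab)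

/-- The map `φ_g : Kv → K^g/K_g`, `a + K_0 ↦ s(g)a + K_g`, is order-preserving
(from `le0` to `leg`). -/
def PhiMono (v : K → WithTop G) (hv : IsGroupVal v) (s : G → K) (g : G)
    (le0 : vQuot v hv (0 : G) → vQuot v hv (0 : G) → Prop)
    (leg : vQuot v hv g → vQuot v hv g → Prop) : Prop :=
  ∀ (a b : K) (ha : a ∈ vGge v hv 0) (hb : b ∈ vGge v hv 0)
    (ha' : s g * a ∈ vGge v hv g) (hb' : s g * b ∈ vGge v hv g),
    le0 (vMk v hv 0 a ha) (vMk v hv 0 b hb) →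
      leg (vMk v hv g (s g * a) ha') (vMk v hv g (s g * b) hb')

/-- The map `φ_g : Kv → K^g/K_g`, `a + K_0 ↦ s(g)a + K_g`, is order-reversing
(from `le0` to `leg`). -/
def PhiAnti (v : K → WithTop G) (hv : IsGroupVal v) (s : G → K) (g : G)
    (le0 : vQuot v hv (0 : G) → vQuot v hv (0 : G) → Prop)
    (leg : vQuot v hv g → vQuot v hv g → Prop) : Prop :=
  ∀ (a b : K) (ha : a ∈ vGge v hv 0) (hb : b ∈ vGge v hv 0)
    (ha' : s g * a ∈ vGge v hv g) (hb' : s g * b ∈ vGge v hv g),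
    le0 (vMk v hv 0 a ha) (vMk v hv 0 b hb) →
      leg (vMk v hv g (s g * b) hb') (vMk v hv g (s g * a) ha')

/-- The lifting of a family of group orders on the quotients `K^g/K_g` to `K`:
`a ≤ b` iff `a = b`, or `0 ≤_g (b - a) + K_g` where `g = v (b - a)`. -/
def LiftOrdFam (v : K → WithTop G) (hv : IsGroupVal v)
    (fam : ∀ g : G, vQuot v hv g → vQuot v hv g → Prop) : K → K → Prop :=
  fun a b => a = b ∨
    ∃ (g : G) (_ : (g : WithTop G) = v (b - a)) (hm : b - a ∈ vGge v hv g),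
      fam g 0 (vMk v hv g (b - a) hm)

end FieldVal

section GOHelpers
variable {A : Type*} [AddCommGroup A] {q : A → A → Prop}

lemma go_refl (h : IsGroupOrder q) (x : A) : q x x := h.1.1 x
lemma go_trans (h : IsGroupOrder q) {x y z : A} : q x y → q y z → q x z :=
  fun a b => h.1.2.1 a b
lemma go_total (h : IsGroupOrder q) (x y : A) : q x y ∨ q y x := h.1.2.2 x y
lemma go_anti (h : IsGroupOrder q) {x y : A} : q x y → q y x → x = y := h.2.1 _ _
lemma go_add (h : IsGroupOrder q) {x y : A} (z : A) : q x y → q (x + z) (y + z) :=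
  h.2.2 _ _ _
lemma go_neg_pos (h : IsGroupOrder q) {x : A} (hx : q x 0) : q 0 (-x) := by
  have := go_add h (-x) hx; simpa using this
lemma go_pos_neg (h : IsGroupOrder q) {x : A} (hx : q 0 x) : q (-x) 0 := by
  have := go_add h (-x) hx; simpa using this
lemma go_sub_iff (h : IsGroupOrder q) {x y : A} : q x y ↔ q 0 (y - x) :=
  ⟨fun hxy => by simpa [sub_eq_add_neg] using go_add h (-x) hxy,
   fun h0 => by simpa [sub_eq_add_neg] using go_add h x h0⟩
lemma go_pos_add (h : IsGroupOrder q) {x y : A} (hx : q 0 x) (hy : q 0 y) :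
    q 0 (x + y) := by
  refine go_trans h hy ?_
  simpa [add_comm] using go_add h y hx

end GOHelpers

section VHelpers
variable {K : Type u} [Field K] {G : Type v} [AddCommGroup G] [LinearOrder G] [IsOrderedAddMonoid G]
variable {v : K → WithTop G}

lemma fv_zero (hv : IsFieldVal v) : v 0 = ⊤ := (hv.2.1 0).mpr rfl
lemma fv_ne_top (hv : IsFieldVal v) {x : K} (hx : x ≠ 0) : v x ≠ ⊤ :=
  fun h => hx ((hv.2.1 x).mp h)
lemma fv_one (hv : IsFieldVal v) : v 1 = 0 := by
  have h1 : v 1 = v 1 + v 1 := by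
    have := hv.2.2.1 1 1; simpa using this
  obtain ⟨γ, hγ⟩ := WithTop.ne_top_iff_exists.mp (fv_ne_top hv (one_ne_zero (α := K)))
  rw [← hγ] at h1 ⊢
  rw [← WithTop.coe_add, WithTop.coe_eq_coe] at h1
  have hγ0 : γ = 0 := by
    have : γ + γ = 0 + γ := by rw [zero_add]; exact h1.symm
    simpa using add_right_cancel this
  rw [hγ0]; rfl
lemma fv_neg (hv : IsFieldVal v) (x : K) : v (-x) = v x := by
  have h1 := hv.toGroupVal.le_neg x
  have h2 := hv.toGroupVal.le_neg (-x)
  rw [neg_neg] at h2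
  exact le_antisymm h2 h1

end VHelpers

section VHelpers2
variable {K : Type u} [Field K] {G : Type v} [AddCommGroup G] [LinearOrder G] [IsOrderedAddMonoid G]
variable {v : K → WithTop G}

lemma fv_add_self_zero {γ : G} (h : γ + γ = 0) : γ = 0 := by
  rcases lt_trichotomy γ 0 with hlt | he | hgt
  · exact absurd h (by have := add_lt_add hlt hlt; rw [add_zero] at this; exact ne_of_lt this)
  · exact he
  · exact absurd h (by have := add_lt_add hgt hgt; rw [add_zero] at this; exact ne_of_gt this)

lemma fv_inv (hv : IsFieldVal v) {x : K} (hx : x ≠ 0) : v x + v x⁻¹ = 0 := by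
  rw [← hv.2.2.1, mul_inv_cancel₀ hx, fv_one hv]

lemma mem_vGge {hv : IsGroupVal v} {γ : G} {a : K} :
    a ∈ vGge v hv γ ↔ (γ : WithTop G) ≤ v a := Iff.rfl

lemma vMk_zero (hv : IsGroupVal v) (γ : G) (h : (0:K) ∈ vGge v hv γ) :
    vMk v hv γ 0 h = 0 := rfl

lemma vMk_congr (hv : IsGroupVal v) (γ : G) {a b : K} (hab : a = b)
    (ha : a ∈ vGge v hv γ) (hb : b ∈ vGge v hv γ) :
    vMk v hv γ a ha = vMk v hv γ b hb := by subst hab; rfl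

lemma vMk_sub (hv : IsGroupVal v) (γ : G) {a b : K} (ha : a ∈ vGge v hv γ)
    (hb : b ∈ vGge v hv γ) (hab : a - b ∈ vGge v hv γ) :
    vMk v hv γ a ha - vMk v hv γ b hb = vMk v hv γ (a - b) hab := rfl

lemma vMk_neg (hv : IsGroupVal v) (γ : G) {a : K} (ha : a ∈ vGge v hv γ)
    (hna : -a ∈ vGge v hv γ) :
    -vMk v hv γ a ha = vMk v hv γ (-a) hna := rfl

lemma vMk_eq_zero_iff (hv : IsGroupVal v) (γ : G) {a : K} (ha : a ∈ vGge v hv γ) :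
    vMk v hv γ a ha = 0 ↔ (γ : WithTop G) < v a := by
  rw [vMk, QuotientAddGroup.eq_zero_iff, AddSubgroup.mem_addSubgroupOf]
  rfl

lemma vMk_eq_of_lt (hv : IsGroupVal v) (γ : G) {a b : K} (ha : a ∈ vGge v hv γ)
    (hb : b ∈ vGge v hv γ) (h : (γ : WithTop G) < v (a - b)) :
    vMk v hv γ a ha = vMk v hv γ b hb := by
  rw [← sub_eq_zero, vMk_sub hv γ ha hb ((vGge v hv γ).sub_mem ha hb),
    vMk_eq_zero_iff]
  exact h

end VHelpers2

section LiftDestruct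
variable {K : Type u} [Field K] {G : Type v} [AddCommGroup G] [LinearOrder G] [IsOrderedAddMonoid G]
variable {v : K → WithTop G} {hv : IsGroupVal v}
variable {fam : ∀ g : G, vQuot v hv g → vQuot v hv g → Prop}

lemma lift_destruct {a b : K} (h : LiftOrdFam v hv fam a b) :
    a = b ∨ ∃ (g : G) (_ : (g : WithTop G) = v (b - a)) (hm : b - a ∈ vGge v hv g),
      fam g 0 (vMk v hv g (b - a) hm) := h

lemma lift_construct {a b : K} (g : G) (hg : (g : WithTop G) = v (b - a))
    (hm : b - a ∈ vGge v hv g) (h : fam g 0 (vMk v hv g (b - a) hm)) :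
    LiftOrdFam v hv fam a b := Or.inr ⟨g, hg, hm, h⟩

end LiftDestruct

lemma vMk_add {K : Type u} [Field K] {G : Type v} [AddCommGroup G] [LinearOrder G] [IsOrderedAddMonoid G]
    {v : K → WithTop G} (hv : IsGroupVal v) (γ : G) {a b : K}
    (ha : a ∈ vGge v hv γ) (hb : b ∈ vGge v hv γ) (hab : a + b ∈ vGge v hv γ) :
    vMk v hv γ a ha + vMk v hv γ b hb = vMk v hv γ (a + b) hab := rfl

section LiftHelpers
variable {K : Type u} [Field K] {G : Type v} [AddCommGroup G] [LinearOrder G] [IsOrderedAddMonoid G]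
variable {v : K → WithTop G} (hv : IsFieldVal v)
variable {fam : ∀ g : G, vQuot v hv.toGroupVal g → vQuot v hv.toGroupVal g → Prop}

/-- Characterization of strict positivity for the lift. -/
lemma lift_pos_iff {x : K} (g : G)
    (hg : (g : WithTop G) = v x) (hm : x ∈ vGge v hv.toGroupVal g) :
    LiftOrdFam v hv.toGroupVal fam 0 x ↔ fam g 0 (vMk v hv.toGroupVal g x hm) := by
  have hx : x ≠ 0 := by
    intro h; rw [h, fv_zero hv] at hg; exact (WithTop.coe_ne_top hg)
  unfold LiftOrdFam
  simp only [sub_zero]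
  constructor
  · rintro (h | ⟨g', hg', hm', hf⟩)
    · exact absurd h.symm hx
    · have : g' = g := WithTop.coe_eq_coe.mp (hg'.trans hg.symm)
      subst this
      exact hf
  · intro h
    exact Or.inr ⟨g, hg, hm, h⟩

lemma vMk_neg_flip {γ : G} {a b : K} (hv' : IsGroupVal v)
    (hm : a ∈ vGge v hv' γ) (hm' : b ∈ vGge v hv' γ) (hab : a = -b) :
    -vMk v hv' γ b hm' = vMk v hv' γ a hm := by
  rw [vMk_neg hv' γ hm' ((vGge v hv' γ).neg_mem hm')]
  exact vMk_congr hv' γ hab.symm _ _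

/-- The lift is always a group order. -/
lemma lift_groupOrder (hfam : ∀ g : G, IsGroupOrder (fam g)) :
    IsGroupOrder (LiftOrdFam v hv.toGroupVal fam) := by
  have key : ∀ a b : K, a ≠ b → ∃ (g : G) (hg : (g : WithTop G) = v (b - a)),
      b - a ∈ vGge v hv.toGroupVal g := by
    intro a b hab
    obtain ⟨g, hg⟩ := WithTop.ne_top_iff_exists.mp
      (fv_ne_top hv (sub_ne_zero_of_ne (Ne.symm hab)))
    exact ⟨g, hg, le_of_eq hg⟩
  have vflip : ∀ a b : K, v (b - a) = v (a - b) := by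
    intro a b; rw [← fv_neg hv (a - b), neg_sub]
  have htotal : ∀ a b : K, LiftOrdFam v hv.toGroupVal fam a b ∨
      LiftOrdFam v hv.toGroupVal fam b a := by
    intro a b
    by_cases hab : a = b
    · exact Or.inl (Or.inl hab)
    obtain ⟨g, hg, hm⟩ := key a b hab
    have hm' : a - b ∈ vGge v hv.toGroupVal g := by
      have := (vGge v hv.toGroupVal g).neg_mem hm; rwa [neg_sub] at this
    rcases go_total (hfam g) 0 (vMk v hv.toGroupVal g (b - a) hm) with h | h
    · exact Or.inl (Or.inr ⟨g, hg, hm, h⟩)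
    · refine Or.inr (lift_construct g (vflip a b ▸ hg) hm' ?_)
      have h2 := go_neg_pos (hfam g) h
      rwa [vMk_neg_flip hv.toGroupVal hm' hm (by ring)] at h2
  have hanti : ∀ a b : K, LiftOrdFam v hv.toGroupVal fam a b →
      LiftOrdFam v hv.toGroupVal fam b a → a = b := by
    intro a b hab hba
    rcases lift_destruct hab with hab' | ⟨g, hg, hm, hf⟩
    · exact hab'
    rcases lift_destruct hba with hba' | ⟨g', hg', hm', hf'⟩
    · exact hba'.symm
    have hgg : g' = g := WithTop.coe_eq_coe.mp (by rw [hg, hg', vflip a b])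
    subst hgg
    have h3 : fam g' (vMk v hv.toGroupVal g' (b - a) hm) 0 := by
      have h0 := go_pos_neg (hfam g') hf'
      rwa [vMk_neg_flip hv.toGroupVal hm hm' (by ring)] at h0
    have h4 := go_anti (hfam g') hf h3
    have h5 : (g' : WithTop G) < v (b - a) := by
      rw [← vMk_eq_zero_iff hv.toGroupVal g' hm]; exact h4.symm
    rw [← hg] at h5; exact absurd h5 (lt_irrefl _)
  have htrans : ∀ a b c : K, LiftOrdFam v hv.toGroupVal fam a b →
      LiftOrdFam v hv.toGroupVal fam b c → LiftOrdFam v hv.toGroupVal fam a c := by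
    intro a b c hab hbc
    by_cases hac : a = c
    · exact Or.inl hac
    rcases lift_destruct hab with rfl | ⟨g₁, hg₁, hm₁, hf₁⟩
    · exact hbc
    rcases lift_destruct hbc with rfl | ⟨g₂, hg₂, hm₂, hf₂⟩
    · exact hab
    obtain ⟨g₃, hg₃, hm₃⟩ := key a c hac
    -- v (c - a) ≥ min g₁ g₂
    have hmin : min (g₁ : WithTop G) (g₂ : WithTop G) ≤ v (c - a) := by
      have h := hv.2.2.2 (c - b) (-(b - a))
      rw [sub_neg_eq_add] at h
      have e : c - b + (b - a) = c - a := by ring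
      rw [e] at h
      rw [hg₁, hg₂]
      rw [fv_neg hv (b - a)] at h
      exact le_trans (by rw [min_comm]) h
    rcases lt_trichotomy g₁ g₂ with hlt | heq | hgt
    · -- v (c - a) = g₁, and c - a ≡ b - a mod K_{g₁}
      have hle : (g₁ : WithTop G) ≤ v (c - a) := by
        rw [← min_eq_left (le_of_lt ((WithTop.coe_lt_coe).mpr hlt))]
        exact hmin
      have hval : (g₁ : WithTop G) = v (c - a) := by
        rcases eq_or_lt_of_le hle with h | h
        · exact h
        exfalso
        have hba : b - a = (c - a) - (c - b) := by ring
        have h2 := hv.2.2.2 (c - a) (c - b)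
        rw [← hba, ← hg₁] at h2
        have h3 : (g₁ : WithTop G) < min (v (c - a)) (v (c - b)) :=
          lt_min h (by rw [← hg₂]; exact_mod_cast hlt)
        exact absurd (lt_of_lt_of_le h3 h2) (lt_irrefl _)
      refine lift_construct g₁ hval (le_of_eq hval) ?_
      have hcl : vMk v hv.toGroupVal g₁ (c - a) (le_of_eq hval)
          = vMk v hv.toGroupVal g₁ (b - a) hm₁ :=
        vMk_eq_of_lt hv.toGroupVal g₁ _ _
          (by rw [(by ring : c - a - (b - a) = c - b), ← hg₂]; exact_mod_cast hlt)
      rw [hcl]; exact hf₁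
    · -- g₁ = g₂
      subst heq
      have hm₂' : c - b ∈ vGge v hv.toGroupVal g₁ := le_of_eq hg₂
      have hle : (g₁ : WithTop G) ≤ v (c - a) := by simpa using hmin
      rcases eq_or_lt_of_le hle with hval | hlt3
      · refine lift_construct g₁ hval (le_of_eq hval) ?_
        have hsum : vMk v hv.toGroupVal g₁ (c - a) (le_of_eq hval)
            = vMk v hv.toGroupVal g₁ (b - a) hm₁ + vMk v hv.toGroupVal g₁ (c - b) hm₂' := by
          rw [vMk_add hv.toGroupVal g₁ hm₁ hm₂'
            ((vGge v hv.toGroupVal g₁).add_mem hm₁ hm₂')]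
          exact vMk_congr hv.toGroupVal g₁ (by ring) _ _
        rw [hsum]
        exact go_pos_add (hfam g₁) hf₁ hf₂
      · exfalso
        have hm₃' : c - a ∈ vGge v hv.toGroupVal g₁ := le_of_lt hlt3
        have hsum0 : vMk v hv.toGroupVal g₁ (b - a) hm₁
            + vMk v hv.toGroupVal g₁ (c - b) hm₂' = 0 := by
          rw [vMk_add hv.toGroupVal g₁ hm₁ hm₂'
            ((vGge v hv.toGroupVal g₁).add_mem hm₁ hm₂')]
          rw [vMk_congr hv.toGroupVal g₁ (by ring : b - a + (c - b) = c - a) _ hm₃']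
          rw [vMk_eq_zero_iff]
          exact hlt3
        have hX : fam g₁ (vMk v hv.toGroupVal g₁ (b - a) hm₁) 0 := by
          have h0 := go_add (hfam g₁) (vMk v hv.toGroupVal g₁ (b - a) hm₁) hf₂
          rw [zero_add, add_comm, hsum0] at h0
          exact h0
        have h4 := go_anti (hfam g₁) hf₁ hX
        have h5 : (g₁ : WithTop G) < v (b - a) := by
          rw [← vMk_eq_zero_iff hv.toGroupVal g₁ hm₁]; exact h4.symm
        rw [← hg₁] at h5; exact absurd h5 (lt_irrefl _)
    · -- v (c - a) = g₂, and c - a ≡ c - b mod K_{g₂}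
      have hle : (g₂ : WithTop G) ≤ v (c - a) := by
        rw [← min_eq_right (le_of_lt ((WithTop.coe_lt_coe).mpr hgt))]
        exact hmin
      have hval : (g₂ : WithTop G) = v (c - a) := by
        rcases eq_or_lt_of_le hle with h | h
        · exact h
        exfalso
        have hcb : c - b = (c - a) - (b - a) := by ring
        have h2 := hv.2.2.2 (c - a) (b - a)
        rw [← hcb, ← hg₂] at h2
        have h3 : (g₂ : WithTop G) < min (v (c - a)) (v (b - a)) :=
          lt_min h (by rw [← hg₁]; exact_mod_cast hgt)
        exact absurd (lt_of_lt_of_le h3 h2) (lt_irrefl _)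
      refine lift_construct g₂ hval (le_of_eq hval) ?_
      have hcl : vMk v hv.toGroupVal g₂ (c - a) (le_of_eq hval)
          = vMk v hv.toGroupVal g₂ (c - b) hm₂ :=
        vMk_eq_of_lt hv.toGroupVal g₂ _ _
          (by rw [(by ring : c - a - (c - b) = b - a), ← hg₁]; exact_mod_cast hgt)
      rw [hcl]; exact hf₂
  exact ⟨⟨fun x => Or.inl rfl, fun {x y z} => htrans x y z, htotal⟩, hanti,
    fun x y z hxy => by
      rcases lift_destruct hxy with rfl | ⟨g, hg, hm, hf⟩
      · exact Or.inl rfl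
      · have e : y + z - (x + z) = y - x := by rw [add_sub_add_right_eq_sub]
        refine lift_construct g (by rw [e]; exact hg) (by rw [e]; exact hm) ?_
        rw [vMk_congr hv.toGroupVal g e _ hm]
        exact hf⟩

end LiftHelpers

section FOHelpers
variable {K : Type u} [Field K] {L : K → K → Prop}

lemma fo_sign_cases (hL : IsFieldOrder L) (x : K) : L 0 x ∨ L 0 (-x) := by
  rcases go_total hL.1 0 x with h | h
  · exact Or.inl h
  · exact Or.inr (go_neg_pos hL.1 h)

lemma fo_pos_unique (hL : IsFieldOrder L) {x : K} (h1 : L 0 x) (h2 : L 0 (-x)) : x = 0 := by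
  have h3 := go_add hL.1 x h2
  rw [zero_add, neg_add_cancel] at h3
  exact (go_anti hL.1 h3 h1).symm ▸ (go_anti hL.1 h3 h1) ▸ rfl

lemma fo_sq_pos (hL : IsFieldOrder L) (d : K) : L 0 (d * d) := by
  rcases fo_sign_cases hL d with h | h
  · exact hL.2 d d h h
  · have := hL.2 (-d) (-d) h h
    rwa [neg_mul_neg] at this

lemma fo_pos_neg (hL : IsFieldOrder L) {x y : K} (hx : L 0 x) (hy : L 0 (-y)) : L 0 (-(x * y)) := by
  have := hL.2 x (-y) hx hy
  rwa [mul_neg] at this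

lemma fo_neg_neg (hL : IsFieldOrder L) {x y : K} (hx : L 0 (-x)) (hy : L 0 (-y)) : L 0 (x * y) := by
  have := hL.2 (-x) (-y) hx hy
  rwa [neg_mul_neg] at this

lemma fo_mul_pos_iff (hL : IsFieldOrder L) {x y : K} (hx : x ≠ 0) (hy : y ≠ 0) :
    L 0 (x * y) ↔ (L 0 x ↔ L 0 y) := by
  constructor
  · intro hxy
    constructor
    · intro hx0
      rcases fo_sign_cases hL y with h | h
      · exact h
      · exact absurd (fo_pos_unique hL hxy (fo_pos_neg hL hx0 h))
          (mul_ne_zero hx hy)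
    · intro hy0
      rcases fo_sign_cases hL x with h | h
      · exact h
      · have : L 0 (-(y * x)) := fo_pos_neg hL hy0 h
        rw [mul_comm] at this
        exact absurd (fo_pos_unique hL hxy this) (mul_ne_zero hx hy)
  · intro hiff
    rcases fo_sign_cases hL x with h | h
    · exact hL.2 x y h (hiff.mp h)
    · refine fo_neg_neg hL h ?_
      rcases fo_sign_cases hL y with h2 | h2
      · exact absurd (fo_pos_unique hL (hiff.mpr h2) h) hx
      · exact h2

end FOHelpers

section FwdRes
variable {K : Type u} [Field K] {G : Type v} [AddCommGroup G] [LinearOrder G] [IsOrderedAddMonoid G]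
variable {v : K → WithTop G} (hv : IsFieldVal v)
variable {fam : ∀ g : G, vQuot v hv.toGroupVal g → vQuot v hv.toGroupVal g → Prop}

lemma fwd_res (hfam : ∀ g : G, IsGroupOrder (fam g))
    (hL : IsFieldOrder (LiftOrdFam v hv.toGroupVal fam)) :
    IsResFieldOrder v hv.toGroupVal (fam 0) := by
  refine ⟨hfam 0, ?_⟩
  intro a b ha hb hab h0a h0b
  have hcoe0 : ((0 : G) : WithTop G) = (0 : WithTop G) := rfl
  by_cases hva : (0 : WithTop G) < v a
  · have hlt : (0 : WithTop G) < v (a * b) := by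
      rw [hv.2.2.1]
      calc (0 : WithTop G) < v a := hva
        _ = v a + 0 := (add_zero _).symm
        _ ≤ v a + v b := add_le_add le_rfl hb
    rw [show vMk v hv.toGroupVal 0 (a * b) hab = 0 from
      (vMk_eq_zero_iff hv.toGroupVal 0 hab).mpr hlt]
    exact go_refl (hfam 0) 0
  by_cases hvb : (0 : WithTop G) < v b
  · have hlt : (0 : WithTop G) < v (a * b) := by
      rw [hv.2.2.1]
      calc (0 : WithTop G) < v b := hvb
        _ ≤ v a + v b := le_add_of_nonneg_left ha
    rw [show vMk v hv.toGroupVal 0 (a * b) hab = 0 from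
      (vMk_eq_zero_iff hv.toGroupVal 0 hab).mpr hlt]
    exact go_refl (hfam 0) 0
  · have hva0 : v a = 0 := le_antisymm (not_lt.mp hva) ha
    have hvb0 : v b = 0 := le_antisymm (not_lt.mp hvb) hb
    have hga : ((0 : G) : WithTop G) = v a := by rw [hcoe0, hva0]
    have hgb : ((0 : G) : WithTop G) = v b := by rw [hcoe0, hvb0]
    have hLa : LiftOrdFam v hv.toGroupVal fam 0 a :=
      (lift_pos_iff hv 0 hga ha).mpr h0a
    have hLb : LiftOrdFam v hv.toGroupVal fam 0 b :=
      (lift_pos_iff hv 0 hgb hb).mpr h0b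
    have hLab := hL.2 a b hLa hLb
    have hgab : ((0 : G) : WithTop G) = v (a * b) := by
      rw [hcoe0, hv.2.2.1, hva0, hvb0, add_zero]
    exact (lift_pos_iff hv 0 hgab hab).mp hLab

end FwdRes

section FwdEps
variable {K : Type u} [Field K] {G : Type v} [AddCommGroup G] [LinearOrder G] [IsOrderedAddMonoid G]
variable {v : K → WithTop G} (hv : IsFieldVal v) {s : G → K}
variable {fam : ∀ g : G, vQuot v hv.toGroupVal g → vQuot v hv.toGroupVal g → Prop}

lemma fo_posmul_iff {L : K → K → Prop} (hL : IsFieldOrder L) {p z : K}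
    (hp : L 0 p) (hpne : p ≠ 0) (hz : z ≠ 0) : L 0 (p * z) ↔ L 0 z := by
  rw [fo_mul_pos_iff hL hpne hz]
  exact ⟨fun h => h.mp hp, fun h => ⟨fun _ => h, fun _ => hp⟩⟩

lemma s_ne_zero (hv : IsFieldVal v) (hs : IsQSection v s) (g : G) : s g ≠ 0 := by
  intro h
  have h2 := hs.2.1 g
  rw [h, fv_zero hv] at h2
  exact WithTop.coe_ne_top h2.symm

lemma fwd_eps (hs : IsQSection v s) (hfam : ∀ g : G, IsGroupOrder (fam g))
    (hL : IsFieldOrder (LiftOrdFam v hv.toGroupVal fam)) :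
    ∃ ε : G → ℤˣ, (∀ g h : G, ε (g + h) = ε g * ε h) ∧
      ∀ g : G,
        (ε g = 1 → PhiMono v hv.toGroupVal s g (fam 0) (fam g)) ∧
        (ε g = -1 → PhiAnti v hv.toGroupVal s g (fam 0) (fam g)) := by
  classical
  set L := LiftOrdFam v hv.toGroupVal fam with hLdef
  refine ⟨fun g => if L 0 (s g) then 1 else -1, ?_, ?_⟩
  · -- multiplicativity
    intro g h
    obtain ⟨d, hd0, hd⟩ := hs.2.2 g h
    have hsgh : s (g + h) = d ^ 2 * (s g * s h) := by
      rw [← div_eq_mul_inv] at hd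
      exact (div_eq_iff (mul_ne_zero (s_ne_zero hv hs g) (s_ne_zero hv hs h))).mp hd
    have hd2pos : L 0 (d ^ 2) := by rw [sq]; exact fo_sq_pos hL d
    have hchain : L 0 (s (g + h)) ↔ (L 0 (s g) ↔ L 0 (s h)) := by
      rw [hsgh, fo_posmul_iff hL hd2pos (pow_ne_zero 2 hd0)
        (mul_ne_zero (s_ne_zero hv hs g) (s_ne_zero hv hs h)),
        fo_mul_pos_iff hL (s_ne_zero hv hs g) (s_ne_zero hv hs h)]
    show (if L 0 (s (g + h)) then (1:ℤˣ) else -1)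
      = (if L 0 (s g) then (1:ℤˣ) else -1) * (if L 0 (s h) then (1:ℤˣ) else -1)
    by_cases hg : L 0 (s g) <;> by_cases hh : L 0 (s h)
    · rw [if_pos hg, if_pos hh, if_pos (hchain.mpr (iff_of_true hg hh))]; rfl
    · rw [if_pos hg, if_neg hh, if_neg (fun hc => hh ((hchain.mp hc).mp hg))]; rfl
    · rw [if_neg hg, if_pos hh, if_neg (fun hc => hg ((hchain.mp hc).mpr hh))]; rfl
    · rw [if_neg hg, if_neg hh,
        if_pos (hchain.mpr (iff_of_false hg hh))]; rfl
  · -- Phi conditions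
    intro g
    constructor
    · -- mono
      intro hε a b ha hb ha' hb' hab
      have hε' : L 0 (s g) := by
        by_contra hc
        simp only [if_neg hc] at hε
        exact absurd hε (by decide)
      have hba : b - a ∈ vGge v hv.toGroupVal 0 := (vGge v hv.toGroupVal 0).sub_mem hb ha
      have hpos : fam 0 0 (vMk v hv.toGroupVal 0 (b - a) hba) := by
        have h0 := (go_sub_iff (hfam 0)).mp hab
        rwa [vMk_sub hv.toGroupVal 0 hb ha hba] at h0
      by_cases hbig : (0 : WithTop G) < v (b - a)
      · have heqc : vMk v hv.toGroupVal g (s g * a) ha' = vMk v hv.toGroupVal g (s g * b) hb' := by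
          apply vMk_eq_of_lt
          rw [← mul_sub, hv.2.2.1, hs.2.1 g]
          have hab' : (0 : WithTop G) < v (a - b) := by
            rw [← neg_sub b a, fv_neg hv]; exact hbig
          calc ((g : WithTop G)) = (g : WithTop G) + 0 := (add_zero _).symm
            _ < (g : WithTop G) + v (a - b) :=
              WithTop.add_lt_add_left (WithTop.coe_ne_top) hab'
        rw [heqc]
        exact go_refl (hfam g) _
      · have hv0 : v (b - a) = 0 := le_antisymm (not_lt.mp hbig) hba
        have hLpos : L 0 (b - a) :=
          (lift_pos_iff hv 0 (by rw [WithTop.coe_zero, hv0]) hba).mpr hpos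
        have hLprod : L 0 (s g * (b - a)) := hL.2 _ _ hε' hLpos
        have hgv : ((g : WithTop G)) = v (s g * (b - a)) := by
          rw [hv.2.2.1, hs.2.1 g, hv0, add_zero]
        have hmem : s g * (b - a) ∈ vGge v hv.toGroupVal g := le_of_eq hgv
        have hfg : fam g 0 (vMk v hv.toGroupVal g (s g * (b - a)) hmem) :=
          (lift_pos_iff hv g hgv hmem).mp hLprod
        apply (go_sub_iff (hfam g)).mpr
        rw [vMk_sub hv.toGroupVal g hb' ha' ((vGge v hv.toGroupVal g).sub_mem hb' ha')]
        rwa [vMk_congr hv.toGroupVal g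
          (by ring : s g * b - s g * a = s g * (b - a)) _ hmem]
    · -- anti
      intro hε a b ha hb ha' hb' hab
      have hε' : ¬ L 0 (s g) := by
        intro hc
        simp only [if_pos hc] at hε
        exact absurd hε (by decide)
      have hneg : L 0 (-(s g)) := by
        rcases fo_sign_cases hL (s g) with h | h
        · exact absurd h hε'
        · exact h
      have hba : b - a ∈ vGge v hv.toGroupVal 0 := (vGge v hv.toGroupVal 0).sub_mem hb ha
      have hpos : fam 0 0 (vMk v hv.toGroupVal 0 (b - a) hba) := by
        have h0 := (go_sub_iff (hfam 0)).mp hab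
        rwa [vMk_sub hv.toGroupVal 0 hb ha hba] at h0
      by_cases hbig : (0 : WithTop G) < v (b - a)
      · have heqc : vMk v hv.toGroupVal g (s g * b) hb' = vMk v hv.toGroupVal g (s g * a) ha' := by
          apply vMk_eq_of_lt
          rw [← mul_sub, hv.2.2.1, hs.2.1 g]
          calc ((g : WithTop G)) = (g : WithTop G) + 0 := (add_zero _).symm
            _ < (g : WithTop G) + v (b - a) :=
              WithTop.add_lt_add_left (WithTop.coe_ne_top) hbig
        rw [heqc]
        exact go_refl (hfam g) _
      · have hv0 : v (b - a) = 0 := le_antisymm (not_lt.mp hbig) hba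
        have hLpos : L 0 (b - a) :=
          (lift_pos_iff hv 0 (by rw [WithTop.coe_zero, hv0]) hba).mpr hpos
        have hLprod : L 0 (s g * (a - b)) := by
          have h1 := fo_pos_neg hL hLpos hneg
          rwa [show -((b - a) * s g) = s g * (a - b) by ring] at h1
        have hvab : v (a - b) = 0 := by
          rw [← neg_sub b a, fv_neg hv]; exact hv0
        have hgv : ((g : WithTop G)) = v (s g * (a - b)) := by
          rw [hv.2.2.1, hs.2.1 g, hvab, add_zero]
        have hmem : s g * (a - b) ∈ vGge v hv.toGroupVal g := le_of_eq hgv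
        have hfg : fam g 0 (vMk v hv.toGroupVal g (s g * (a - b)) hmem) :=
          (lift_pos_iff hv g hgv hmem).mp hLprod
        apply (go_sub_iff (hfam g)).mpr
        rw [vMk_sub hv.toGroupVal g ha' hb' ((vGge v hv.toGroupVal g).sub_mem ha' hb')]
        rwa [vMk_congr hv.toGroupVal g
          (by ring : s g * a - s g * b = s g * (a - b)) _ hmem]

end FwdEps

section Bwd
variable {K : Type u} [Field K] {G : Type v} [AddCommGroup G] [LinearOrder G] [IsOrderedAddMonoid G]
variable {v : K → WithTop G} (hv : IsFieldVal v) {s : G → K}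
variable {fam : ∀ g : G, vQuot v hv.toGroupVal g → vQuot v hv.toGroupVal g → Prop}

lemma fv_inv_eq (hv : IsFieldVal v) {x : K} {γ : G} (hx : x ≠ 0)
    (h : v x = (γ : WithTop G)) : v x⁻¹ = ((-γ : G) : WithTop G) := by
  have h1 := fv_inv hv hx
  obtain ⟨δ, hδ⟩ := WithTop.ne_top_iff_exists.mp (fv_ne_top hv (inv_ne_zero hx))
  rw [h, ← hδ, ← WithTop.coe_add, ← WithTop.coe_zero, WithTop.coe_eq_coe] at h1
  rw [← hδ, WithTop.coe_eq_coe]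
  exact (neg_eq_of_add_eq_zero_right h1).symm

lemma v_unitpart (hv : IsFieldVal v) (hs : IsQSection v s) {x : K} {g : G}
    (hg : (g : WithTop G) = v x) : v ((s g)⁻¹ * x) = 0 := by
  rw [hv.2.2.1, fv_inv_eq hv (s_ne_zero hv hs g) (hs.2.1 g), ← hg,
    ← WithTop.coe_add, neg_add_cancel, WithTop.coe_zero]

lemma mem0_of_v0 {x : K} (hx : v x = 0) : x ∈ vGge v hv.toGroupVal 0 := by
  rw [mem_vGge, WithTop.coe_zero, hx]

lemma bwd (hs : IsQSection v s) (hfam : ∀ g : G, IsGroupOrder (fam g))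
    (hres : IsResFieldOrder v hv.toGroupVal (fam 0)) (ε : G → ℤˣ)
    (hmul : ∀ g h : G, ε (g + h) = ε g * ε h)
    (hphi : ∀ g : G, (ε g = 1 → PhiMono v hv.toGroupVal s g (fam 0) (fam g)) ∧
      (ε g = -1 → PhiAnti v hv.toGroupVal s g (fam 0) (fam g))) :
    IsFieldOrder (LiftOrdFam v hv.toGroupVal fam) := by
  refine ⟨lift_groupOrder hv hfam, ?_⟩
  intro a b hLa hLb
  rcases eq_or_ne a 0 with rfl | ha0
  · rw [zero_mul]; exact Or.inl rfl
  rcases eq_or_ne b 0 with rfl | hb0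
  · rw [mul_zero]; exact Or.inl rfl
  obtain ⟨g, hg⟩ := WithTop.ne_top_iff_exists.mp (fv_ne_top hv ha0)
  obtain ⟨h, hh⟩ := WithTop.ne_top_iff_exists.mp (fv_ne_top hv hb0)
  have hma : a ∈ vGge v hv.toGroupVal g := le_of_eq hg
  have hmb : b ∈ vGge v hv.toGroupVal h := le_of_eq hh
  have hfa : fam g 0 (vMk v hv.toGroupVal g a hma) := (lift_pos_iff hv g hg hma).mp hLa
  have hfb : fam h 0 (vMk v hv.toGroupVal h b hmb) := (lift_pos_iff hv h hh hmb).mp hLb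
  -- the key sign extraction
  have key : ∀ (x : K) (g : G) (hgx : (g : WithTop G) = v x)
      (hmx : x ∈ vGge v hv.toGroupVal g),
      fam g 0 (vMk v hv.toGroupVal g x hmx) →
      ∀ (hm0 : (s g)⁻¹ * x ∈ vGge v hv.toGroupVal 0)
        (hm0' : -((s g)⁻¹ * x) ∈ vGge v hv.toGroupVal 0),
      (ε g = 1 ∧ fam 0 0 (vMk v hv.toGroupVal 0 ((s g)⁻¹ * x) hm0)) ∨
      (ε g = -1 ∧ fam 0 0 (vMk v hv.toGroupVal 0 (-((s g)⁻¹ * x)) hm0')) := by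
    intro x g hgx hmx hfx hm0 hm0'
    have hsx : s g * ((s g)⁻¹ * x) = x := by
      rw [← mul_assoc, mul_inv_cancel₀ (s_ne_zero hv hs g), one_mul]
    have hsgu : s g * ((s g)⁻¹ * x) ∈ vGge v hv.toGroupVal g := by
      rw [mem_vGge, hsx]; exact le_of_eq hgx
    have hsg0 : s g * 0 ∈ vGge v hv.toGroupVal g := by
      rw [mem_vGge, mul_zero, fv_zero hv]; exact le_top
    have hzmem : (0 : K) ∈ vGge v hv.toGroupVal 0 := (vGge v hv.toGroupVal 0).zero_mem
    have hcontra : fam g (vMk v hv.toGroupVal g x hmx) 0 → False := by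
      intro hneg
      have h4 := go_anti (hfam g) hfx hneg
      have h5 : (g : WithTop G) < v x := by
        rw [← vMk_eq_zero_iff hv.toGroupVal g hmx]; exact h4.symm
      rw [← hgx] at h5; exact absurd h5 (lt_irrefl _)
    rcases Int.units_eq_one_or (ε g) with hε | hε
    · left
      refine ⟨hε, ?_⟩
      rcases go_total (hfam 0) 0 (vMk v hv.toGroupVal 0 ((s g)⁻¹ * x) hm0) with hp | hp
      · exact hp
      exfalso
      have hp' : fam 0 (vMk v hv.toGroupVal 0 ((s g)⁻¹ * x) hm0)
          (vMk v hv.toGroupVal 0 (0:K) hzmem) := by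
        rwa [vMk_zero]
      have hmono := (hphi g).1 hε ((s g)⁻¹ * x) 0 hm0 hzmem hsgu hsg0 hp'
      apply hcontra
      rw [vMk_congr hv.toGroupVal g hsx hsgu hmx,
        vMk_congr hv.toGroupVal g (mul_zero (s g)) hsg0
          ((vGge v hv.toGroupVal g).zero_mem), vMk_zero] at hmono
      exact hmono
    · right
      refine ⟨hε, ?_⟩
      rcases go_total (hfam 0) 0
        (vMk v hv.toGroupVal 0 (-((s g)⁻¹ * x)) hm0') with hp | hp
      · exact hp
      exfalso
      have hp2 : fam 0 0 (vMk v hv.toGroupVal 0 ((s g)⁻¹ * x) hm0) := by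
        have h0 := go_neg_pos (hfam 0) hp
        rwa [vMk_neg_flip hv.toGroupVal hm0 hm0' (by ring)] at h0
      have hp' : fam 0 (vMk v hv.toGroupVal 0 (0:K) hzmem)
          (vMk v hv.toGroupVal 0 ((s g)⁻¹ * x) hm0) := by
        rwa [vMk_zero]
      have hanti := (hphi g).2 hε 0 ((s g)⁻¹ * x) hzmem hm0 hsg0 hsgu hp'
      apply hcontra
      rw [vMk_congr hv.toGroupVal g hsx hsgu hmx,
        vMk_congr hv.toGroupVal g (mul_zero (s g)) hsg0
          ((vGge v hv.toGroupVal g).zero_mem), vMk_zero] at hanti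
      exact hanti
  -- set up unit parts
  set u := (s g)⁻¹ * a with hu
  set w := (s h)⁻¹ * b with hw
  have hvu : v u = 0 := v_unitpart hv hs hg
  have hvw : v w = 0 := v_unitpart hv hs hh
  have hmu : u ∈ vGge v hv.toGroupVal 0 := mem0_of_v0 hv hvu
  have hmw : w ∈ vGge v hv.toGroupVal 0 := mem0_of_v0 hv hvw
  have hmu' : -u ∈ vGge v hv.toGroupVal 0 := (vGge v hv.toGroupVal 0).neg_mem hmu
  have hmw' : -w ∈ vGge v hv.toGroupVal 0 := (vGge v hv.toGroupVal 0).neg_mem hmw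
  have hka := key a g hg hma hfa hmu hmu'
  have hkb := key b h hh hmb hfb hmw hmw'
  -- square correction
  obtain ⟨d, hd0, hd⟩ := hs.2.2 g h
  have hsgh : s (g + h) = d ^ 2 * (s g * s h) := by
    rw [← div_eq_mul_inv] at hd
    exact (div_eq_iff (mul_ne_zero (s_ne_zero hv hs g) (s_ne_zero hv hs h))).mp hd
  have hvd : v d = 0 := by
    have h1 : v (d ^ 2) = v d + v d := by rw [sq, hv.2.2.1]
    have h2 : v (d ^ 2) = 0 := by
      rw [← hd, hv.2.2.1, hs.2.1,
        fv_inv_eq hv (mul_ne_zero (s_ne_zero hv hs g) (s_ne_zero hv hs h))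
          (by rw [hv.2.2.1, hs.2.1, hs.2.1, WithTop.coe_add]),
        ← WithTop.coe_add, add_neg_cancel, WithTop.coe_zero]
    obtain ⟨δ, hδ⟩ := WithTop.ne_top_iff_exists.mp (fv_ne_top hv hd0)
    have h3 : ((δ + δ : G) : WithTop G) = ((0 : G) : WithTop G) := by
      rw [WithTop.coe_add, hδ, ← h1, h2, WithTop.coe_zero]
    have h4 := fv_add_self_zero (WithTop.coe_eq_coe.mp h3)
    rw [← hδ, h4]; rfl
  set e := d⁻¹ with he
  have hve : v e = 0 := by
    rw [he, fv_inv_eq hv hd0 hvd, neg_zero, WithTop.coe_zero]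
  have hme : e ∈ vGge v hv.toGroupVal 0 := mem0_of_v0 hv hve
  have hvee : v (e * e) = 0 := by rw [hv.2.2.1, hve]; simp
  have hmee : e * e ∈ vGge v hv.toGroupVal 0 := mem0_of_v0 hv hvee
  -- e² is a positive residue
  have hee : fam 0 0 (vMk v hv.toGroupVal 0 (e * e) hmee) := by
    rcases go_total (hfam 0) 0 (vMk v hv.toGroupVal 0 e hme) with hp | hp
    · exact hres.2 e e hme hme hmee hp hp
    · have hme' : -e ∈ vGge v hv.toGroupVal 0 := (vGge v hv.toGroupVal 0).neg_mem hme
      have hp2 : fam 0 0 (vMk v hv.toGroupVal 0 (-e) hme') := by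
        have h0 := go_neg_pos (hfam 0) hp
        rwa [vMk_neg hv.toGroupVal 0 hme hme'] at h0
      have hmee' : (-e) * (-e) ∈ vGge v hv.toGroupVal 0 := by
        rw [neg_mul_neg]; exact hmee
      have h3 := hres.2 (-e) (-e) hme' hme' hmee' hp2 hp2
      rwa [vMk_congr hv.toGroupVal 0 (neg_mul_neg e e) hmee' hmee] at h3
  -- the unit part of a * b
  set c := (e * e) * (u * w) with hc
  have hvc : v c = 0 := by
    rw [hc, hv.2.2.1, hvee, hv.2.2.1, hvu, hvw]; simp
  have hmc : c ∈ vGge v hv.toGroupVal 0 := mem0_of_v0 hv hvc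
  have hmc' : -c ∈ vGge v hv.toGroupVal 0 := (vGge v hv.toGroupVal 0).neg_mem hmc
  have habc : s (g + h) * c = a * b := by
    have hgne := s_ne_zero hv hs g
    have hhne := s_ne_zero hv hs h
    rw [hsgh, hc, he, hu, hw]
    field_simp
  -- combined sign of c
  have hsignc : (ε (g + h) = 1 ∧ fam 0 0 (vMk v hv.toGroupVal 0 c hmc)) ∨
      (ε (g + h) = -1 ∧ fam 0 0 (vMk v hv.toGroupVal 0 (-c) hmc')) := by
    have hmuw : u * w ∈ vGge v hv.toGroupVal 0 :=
      mem0_of_v0 hv (by rw [hv.2.2.1, hvu, hvw]; simp)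
    rcases hka with ⟨hεg, hfu⟩ | ⟨hεg, hfu⟩ <;> rcases hkb with ⟨hεh, hfw⟩ | ⟨hεh, hfw⟩
    · left
      refine ⟨by rw [hmul, hεg, hεh]; rfl, ?_⟩
      exact hres.2 (e * e) (u * w) hmee hmuw hmc hee
        (hres.2 u w hmu hmw hmuw hfu hfw)
    · right
      refine ⟨by rw [hmul, hεg, hεh]; rfl, ?_⟩
      have hm1 : u * -w ∈ vGge v hv.toGroupVal 0 := by
        rw [mul_neg]; exact (vGge v hv.toGroupVal 0).neg_mem hmuw
      have hm2 : (e * e) * (u * -w) ∈ vGge v hv.toGroupVal 0 := by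
        rw [mul_neg, mul_neg]; exact (vGge v hv.toGroupVal 0).neg_mem hmc
      have h3 := hres.2 (e * e) (u * -w) hmee hm1 hm2 hee
        (hres.2 u (-w) hmu hmw' hm1 hfu hfw)
      rwa [vMk_congr hv.toGroupVal 0 (by rw [hc]; ring) hm2 hmc'] at h3
    · right
      refine ⟨by rw [hmul, hεg, hεh]; rfl, ?_⟩
      have hm1 : (-u) * w ∈ vGge v hv.toGroupVal 0 := by
        rw [neg_mul]; exact (vGge v hv.toGroupVal 0).neg_mem hmuw
      have hm2 : (e * e) * ((-u) * w) ∈ vGge v hv.toGroupVal 0 := by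
        rw [neg_mul, mul_neg]; exact (vGge v hv.toGroupVal 0).neg_mem hmc
      have h3 := hres.2 (e * e) ((-u) * w) hmee hm1 hm2 hee
        (hres.2 (-u) w hmu' hmw hm1 hfu hfw)
      rwa [vMk_congr hv.toGroupVal 0 (by rw [hc]; ring) hm2 hmc'] at h3
    · left
      refine ⟨by rw [hmul, hεg, hεh]; rfl, ?_⟩
      have hm1 : (-u) * (-w) ∈ vGge v hv.toGroupVal 0 := by
        rw [neg_mul_neg]; exact hmuw
      have hm2 : (e * e) * ((-u) * (-w)) ∈ vGge v hv.toGroupVal 0 := by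
        rw [neg_mul_neg]; exact hmc
      have h3 := hres.2 (e * e) ((-u) * (-w)) hmee hm1 hm2 hee
        (hres.2 (-u) (-w) hmu' hmw' hm1 hfu hfw)
      rwa [vMk_congr hv.toGroupVal 0 (by rw [hc]; ring) hm2 hmc] at h3
  -- finish: lift positivity of a * b at level g + h
  have hgab : ((g + h : G) : WithTop G) = v (a * b) := by
    rw [hv.2.2.1, ← hg, ← hh, WithTop.coe_add]
  have hmab : a * b ∈ vGge v hv.toGroupVal (g + h) := le_of_eq hgab
  have hsc : s (g + h) * c ∈ vGge v hv.toGroupVal (g + h) := by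
    rw [mem_vGge, habc]; exact le_of_eq hgab
  have hs0 : s (g + h) * 0 ∈ vGge v hv.toGroupVal (g + h) := by
    rw [mem_vGge, mul_zero, fv_zero hv]; exact le_top
  have hzmem : (0 : K) ∈ vGge v hv.toGroupVal 0 := (vGge v hv.toGroupVal 0).zero_mem
  refine (lift_pos_iff hv (g + h) hgab hmab).mpr ?_
  rcases hsignc with ⟨hεgh, hfc⟩ | ⟨hεgh, hfc⟩
  · have hp' : fam 0 (vMk v hv.toGroupVal 0 (0:K) hzmem)
        (vMk v hv.toGroupVal 0 c hmc) := by rwa [vMk_zero]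
    have hmono := (hphi (g + h)).1 hεgh 0 c hzmem hmc hs0 hsc hp'
    rwa [vMk_congr hv.toGroupVal (g + h) (mul_zero (s (g + h))) hs0
        ((vGge v hv.toGroupVal (g + h)).zero_mem), vMk_zero,
      vMk_congr hv.toGroupVal (g + h) habc hsc hmab] at hmono
  · have hfc2 : fam 0 (vMk v hv.toGroupVal 0 c hmc)
        (vMk v hv.toGroupVal 0 (0:K) hzmem) := by
      rw [vMk_zero]
      have h0 := go_pos_neg (hfam 0) hfc
      rwa [vMk_neg_flip hv.toGroupVal hmc hmc' (by ring)] at h0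
    have hanti := (hphi (g + h)).2 hεgh c 0 hmc hzmem hsc hs0 hfc2
    rwa [vMk_congr hv.toGroupVal (g + h) (mul_zero (s (g + h))) hs0
        ((vGge v hv.toGroupVal (g + h)).zero_mem), vMk_zero,
      vMk_congr hv.toGroupVal (g + h) habc hsc hmab] at hanti

end Bwd

theorem stmt18 {K : Type u} [Field K] {G : Type v} [AddCommGroup G] [LinearOrder G] [IsOrderedAddMonoid G]
    (v : K → WithTop G) (hv : IsFieldVal v) (s : G → K) (hs : IsQSection v s)
    (fam : ∀ g : G, vQuot v hv.toGroupVal g → vQuot v hv.toGroupVal g → Prop)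
    (hfam : ∀ g : G, IsGroupOrder (fam g)) :
    IsFieldOrder (LiftOrdFam v hv.toGroupVal fam) ↔
      (IsResFieldOrder v hv.toGroupVal (fam 0) ∧
        ∃ ε : G → ℤˣ, (∀ g h : G, ε (g + h) = ε g * ε h) ∧
          ∀ g : G,
            (ε g = 1 → PhiMono v hv.toGroupVal s g (fam 0) (fam g)) ∧
            (ε g = -1 → PhiAnti v hv.toGroupVal s g (fam 0) (fam g))) := by
  constructor
  · intro hL
    exact ⟨fwd_res hv hfam hL, fwd_eps hv hs hfam hL⟩
  · rintro ⟨hres, ε, hmul, hphi⟩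
    exact bwd hv hs hfam hres ε hmul hphi
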